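/- For every integer m ≥ 1 and all scalars a, b ∈ ℂ not both zero, the polynomial a·x_0^m + b·x_1^m does not belong to the ideal I generated by the polynomials of the generalized Fermat system of type (k,n). (In particular, the images of x_0^m and x_1^m in the homogeneous coordinate ring ℂ[x_0,…,x_n]/I are linearly independent over ℂ.) -/
import Mathlib

noncomputable section

/-- The polynomials `P₁, …, P_{n-1}` of the generalized Fermat system of type `(k,n)`:
`P₁ = x₀^k + x₁^k + x₂^k` and `P_{j+1} = λ_j·x₀^k + x₁^k + x_{j+2}^k` for `j = 1, …, n-2`
(0-indexed below). -/
def gfPoly (k n : ℕ) (hn : 3 ≤ n) (lam : Fin (n - 2) → ℂ) :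
    Fin (n - 1) → MvPolynomial (Fin (n + 1)) ℂ := fun i =>
  if (i : ℕ) = 0 then
    MvPolynomial.X ⟨0, by omega⟩ ^ k + MvPolynomial.X ⟨1, by omega⟩ ^ k +
      MvPolynomial.X ⟨2, by omega⟩ ^ k
  else
    MvPolynomial.C (lam ⟨(i : ℕ) - 1, by have := i.2; omega⟩) *
        MvPolynomial.X ⟨0, by omega⟩ ^ k +
      MvPolynomial.X ⟨1, by omega⟩ ^ k +
      MvPolynomial.X ⟨(i : ℕ) + 2, by have := i.2; omega⟩ ^ k

/-- A chosen k-th root in ℂ. -/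
def kroot (k : ℕ) (hk : 0 < k) (c : ℂ) : ℂ :=
  Classical.choose (IsAlgClosed.exists_pow_nat_eq c hk)

lemma kroot_pow (k : ℕ) (hk : 0 < k) (c : ℂ) : kroot k hk c ^ k = c :=
  Classical.choose_spec (IsAlgClosed.exists_pow_nat_eq c hk)

theorem generalized_fermat_powers_independent (k n : ℕ) (hk : 2 ≤ k) (hn : 3 ≤ n)
    (lam : Fin (n - 2) → ℂ) (hl0 : ∀ j, lam j ≠ 0) (hl1 : ∀ j, lam j ≠ 1)
    (hinj : Function.Injective lam)
    (m : ℕ) (hm : 1 ≤ m) (a b : ℂ) (hab : a ≠ 0 ∨ b ≠ 0) :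
    MvPolynomial.C a * MvPolynomial.X (⟨0, by omega⟩ : Fin (n + 1)) ^ m +
        MvPolynomial.C b * MvPolynomial.X (⟨1, by omega⟩ : Fin (n + 1)) ^ m ∉
      Ideal.span (Set.range (gfPoly k n hn lam)) := by
  have hk' : 0 < k := by omega
  have hm' : m ≠ 0 := by omega
  intro hmem
  obtain ⟨c0, c1, hne⟩ : ∃ c0 c1 : ℂ, a * c0 ^ m + b * c1 ^ m ≠ 0 := by
    rcases hab with ha | hb
    · exact ⟨1, 0, by simpa [zero_pow hm'] using ha⟩
    · exact ⟨0, 1, by simpa [zero_pow hm'] using hb⟩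
  set g : Fin (n + 1) → ℂ := fun i =>
    if (i : ℕ) = 0 then c0
    else if (i : ℕ) = 1 then c1
    else if (i : ℕ) = 2 then kroot k hk' (-(c0 ^ k + c1 ^ k))
    else kroot k hk'
      (-(lam ⟨(i : ℕ) - 3, by have := i.2; omega⟩ * c0 ^ k + c1 ^ k)) with hg
  have hker : Ideal.span (Set.range (gfPoly k n hn lam)) ≤
      RingHom.ker (MvPolynomial.eval g) := by
    rw [Ideal.span_le]
    rintro _ ⟨i, rfl⟩
    simp only [SetLike.mem_coe, RingHom.mem_ker]
    rcases Nat.eq_zero_or_pos (i : ℕ) with h0 | hpos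
    · simp only [gfPoly, h0, if_true, map_add, map_pow, MvPolynomial.eval_X]
      have h2 : g ⟨2, by omega⟩ = kroot k hk' (-(c0 ^ k + c1 ^ k)) := by simp [hg]
      have h0' : g ⟨0, by omega⟩ = c0 := by simp [hg]
      have h1' : g ⟨1, by omega⟩ = c1 := by simp [hg]
      rw [h0', h1', h2, kroot_pow]; ring
    · have hne0 : (i : ℕ) ≠ 0 := by omega
      simp only [gfPoly, if_neg hne0, map_add, map_mul, map_pow, MvPolynomial.eval_X,
        MvPolynomial.eval_C]
      have h0' : g ⟨0, by omega⟩ = c0 := by simp [hg]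
      have h1' : g ⟨1, by omega⟩ = c1 := by simp [hg]
      have hi : g ⟨(i : ℕ) + 2, by have := i.2; omega⟩ =
          kroot k hk' (-(lam ⟨(i : ℕ) - 1, by have := i.2; omega⟩ * c0 ^ k + c1 ^ k)) := by
        have hA : ((⟨(i : ℕ) + 2, by have := i.2; omega⟩ : Fin (n + 1)) : ℕ) = (i : ℕ) + 2 := rfl
        rw [hg]
        simp only [hA, if_neg (by omega : (i : ℕ) + 2 ≠ 0),
          if_neg (by omega : (i : ℕ) + 2 ≠ 1), if_neg (by omega : (i : ℕ) + 2 ≠ 2)]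
        congr 2
      rw [h0', h1', hi, kroot_pow]; ring
  have := hker hmem
  rw [RingHom.mem_ker] at this
  apply hne
  simpa [hg] using this
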